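/- arXiv:2104.06085 — 2 statements merged into one kernel-verified Lean document; each statement's English description precedes it below -/
import Mathlib

section
/- Let φ be a GFG-QPTL formula and 𝔄₁, 𝔄₂ hyperassignments with 𝔄₁ ≡ 𝔄₂. Then, for each alternation flag α ∈ {EA, AE}: 𝔄₁ ⊨^α φ if and only if 𝔄₂ ⊨^α φ. (Corollary 1, Hyperassignment Equivalence.) -/
namespace GFG

/-- Temporal valuations. -/
abbrev Val : Type := ℕ → Bool

/-- Assignments over a type `AP` of atomic propositions. -/
abbrev Asg (AP : Type*) : Type _ := AP → Val

section Hyper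

variable {X : Type*}

/-- A hyperassignment: a nonempty set of subsets not containing `∅`. -/
def IsHyp (𝔄 : Set (Set X)) : Prop := 𝔄 ≠ ∅ ∧ ∅ ∉ 𝔄

/-- A choice function for `𝔄`. -/
def IsChoice (𝔄 : Set (Set X)) (ϑ : Set X → X) : Prop := ∀ W ∈ 𝔄, ϑ W ∈ W

/-- The dual hyperassignment. -/
def hdual (𝔄 : Set (Set X)) : Set (Set X) :=
  { Y | ∃ ϑ : Set X → X, IsChoice 𝔄 ϑ ∧ Y = ϑ '' 𝔄 }

/-- The preorder `⊑` on hyperassignments. -/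
def hle (𝔄₁ 𝔄₂ : Set (Set X)) : Prop := ∀ W₁ ∈ 𝔄₁, ∃ W₂ ∈ 𝔄₂, W₂ ⊆ W₁

/-- The equivalence `≡` on hyperassignments. -/
def heqv (𝔄₁ 𝔄₂ : Set (Set X)) : Prop := hle 𝔄₁ 𝔄₂ ∧ hle 𝔄₂ 𝔄₁

/-- `par 𝔄`: partitions of `𝔄` into two disjoint parts. -/
def par (𝔄 : Set (Set X)) : Set (Set (Set X) × Set (Set X)) :=
  { pr | pr.1 ∪ pr.2 = 𝔄 ∧ Disjoint pr.1 pr.2 }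

end Hyper

variable {AP : Type*}

/-- `a₁ ≈_p^{>k} a₂`. -/
def ApproxGT (p : AP) (k : ℕ) (a₁ a₂ : Asg AP) : Prop :=
  (∀ q, q ≠ p → a₁ q = a₂ q) ∧ ∀ t ≤ k, a₁ p t = a₂ p t

/-- `a₁ ≈_p^{≥k} a₂`. -/
def ApproxGE (p : AP) (k : ℕ) (a₁ a₂ : Asg AP) : Prop :=
  (∀ q, q ≠ p → a₁ q = a₂ q) ∧ ∀ t < k, a₁ p t = a₂ p t

/-- Quantifier specifications `ς = (B,S)`. -/
abbrev Spec (AP : Type*) := Set AP × Set AP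

/-- A `ς`-functor. -/
def IsSpecFunctor (ς : Spec AP) (F : Asg AP → Val) : Prop :=
  (∀ (k : ℕ) (a₁ a₂ : Asg AP), (∃ p ∈ ς.1, ApproxGT p k a₁ a₂) → F a₁ k = F a₂ k) ∧
  (∀ (k : ℕ) (a₁ a₂ : Asg AP), (∃ p ∈ ς.2, ApproxGE p k a₁ a₂) → F a₁ k = F a₂ k)

variable [DecidableEq AP]

/-- `ext(a,F,p)`. -/
def extAsg (a : Asg AP) (F : Asg AP → Val) (p : AP) : Asg AP :=
  Function.update a p (F a)

/-- `ext(W,F,p)`. -/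
def extSet (W : Set (Asg AP)) (F : Asg AP → Val) (p : AP) : Set (Asg AP) :=
  (fun a => extAsg a F p) '' W

/-- `ext_ς(𝔄,p)`. -/
def extSpec (ς : Spec AP) (𝔄 : Set (Set (Asg AP))) (p : AP) : Set (Set (Asg AP)) :=
  { Y | ∃ W ∈ 𝔄, ∃ F : Asg AP → Val, IsSpecFunctor ς F ∧ Y = extSet W F p }

/-- Alternation flags. -/
inductive Flag : Type
  | EA : Flag
  | AE : Flag
  deriving DecidableEq

/-- The dual flag. -/
def Flag.dual : Flag → Flag
  | .EA => .AE
  | .AE => .EA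

/-- GFG-QPTL formulas (LTL formulas abstracted as arbitrary sets of assignments). -/
inductive Formula (AP : Type*) : Type _ where
  | atom : Set (Asg AP) → Formula AP
  | neg : Formula AP → Formula AP
  | conj : Formula AP → Formula AP → Formula AP
  | disj : Formula AP → Formula AP → Formula AP
  | ex : AP → Spec AP → Formula AP → Formula AP
  | all : AP → Spec AP → Formula AP → Formula AP

/-- The alternating Hodges semantics `𝔄 ⊨^α φ`. -/
def Sat : Formula AP → Flag → Set (Set (Asg AP)) → Prop
  | .atom Ψ, .EA, 𝔄 => ∃ W ∈ 𝔄, W ⊆ Ψ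
  | .atom Ψ, .AE, 𝔄 => ∀ W ∈ 𝔄, W ∩ Ψ ≠ ∅
  | .neg φ, α, 𝔄 => ¬ Sat φ α.dual 𝔄
  | .conj φ₁ φ₂, .EA, 𝔄 =>
      ∀ pr ∈ par 𝔄, (pr.1 ≠ ∅ ∧ Sat φ₁ .EA pr.1) ∨ (pr.2 ≠ ∅ ∧ Sat φ₂ .EA pr.2)
  | .conj φ₁ φ₂, .AE, 𝔄 =>
      ∀ pr ∈ par (hdual 𝔄), (pr.1 ≠ ∅ ∧ Sat φ₁ .EA pr.1) ∨ (pr.2 ≠ ∅ ∧ Sat φ₂ .EA pr.2)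
  | .disj φ₁ φ₂, .AE, 𝔄 =>
      ∃ pr ∈ par 𝔄, (pr.1 ≠ ∅ → Sat φ₁ .AE pr.1) ∧ (pr.2 ≠ ∅ → Sat φ₂ .AE pr.2)
  | .disj φ₁ φ₂, .EA, 𝔄 =>
      ∃ pr ∈ par (hdual 𝔄), (pr.1 ≠ ∅ → Sat φ₁ .AE pr.1) ∧ (pr.2 ≠ ∅ → Sat φ₂ .AE pr.2)
  | .ex p ς φ, .EA, 𝔄 => Sat φ .EA (extSpec ς 𝔄 p)
  | .ex p ς φ, .AE, 𝔄 => Sat φ .EA (extSpec ς (hdual 𝔄) p)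
  | .all p ς φ, .AE, 𝔄 => Sat φ .AE (extSpec ς 𝔄 p)
  | .all p ς φ, .EA, 𝔄 => Sat φ .AE (extSpec ς (hdual 𝔄) p)

/-!
`⊨^{EA}` is upward closed and `⊨^{AE}` downward closed along `⊑`, by one induction on `φ`.
The dual reverses `⊑` (compose a choice function with a refinement map), which is what lets the
two flags trade places at the dual clauses; a partition of the refined side pulls back along the
refinement map to a partition of the other side.
-/

section Refinement

variable {X : Type*} {A B : Set (Set X)}

lemma hle.ne_empty (h : hle A B) (hA : A ≠ ∅) : B ≠ ∅ := by
  obtain ⟨W, hW⟩ := Set.nonempty_iff_ne_empty.2 hA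
  obtain ⟨W', hW', -⟩ := h W hW
  exact Set.nonempty_iff_ne_empty.1 ⟨W', hW'⟩

lemma hle.hdual (h : hle A B) : hle (hdual B) (hdual A) := by
  choose! g hgB hgsub using h
  rintro _ ⟨ϑ, hϑ, rfl⟩
  refine ⟨(ϑ ∘ g) '' A, ⟨ϑ ∘ g, fun W hW => hgsub W hW (hϑ _ (hgB W hW)), rfl⟩, ?_⟩
  rintro _ ⟨W, hW, rfl⟩
  exact ⟨g W, hgB W hW, rfl⟩

lemma hle.exists_par {pr : Set (Set X) × Set (Set X)} (h : hle A B) (hpr : pr ∈ par B) :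
    ∃ qr ∈ par A, hle qr.1 pr.1 ∧ hle qr.2 pr.2 := by
  choose! g hgB hgsub using h
  obtain ⟨hunion, -⟩ := hpr
  refine ⟨({W ∈ A | g W ∈ pr.1}, {W ∈ A | g W ∉ pr.1}), ⟨?_, ?_⟩, ?_, ?_⟩
  · rw [← Set.sep_or]
    simp only [em, and_true, Set.ofPred_mem_eq]
  · exact Set.disjoint_left.2 fun W h₁ h₂ => h₂.2 h₁.2
  · exact fun W hW => ⟨g W, hW.2, hgsub W hW.1⟩
  · rintro W ⟨hWA, hWp⟩
    have hgW : g W ∈ pr.1 ∪ pr.2 := hunion ▸ hgB W hWA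
    exact ⟨g W, hgW.resolve_left hWp, hgsub W hWA⟩

variable {S₁ S₂ : Set (Set X) → Prop}

lemma hle.forall_par
    (m₁ : ∀ ⦃U V⦄, hle U V → S₁ U → S₁ V) (m₂ : ∀ ⦃U V⦄, hle U V → S₂ U → S₂ V)
    (h : hle A B) (hA : ∀ pr ∈ par A, (pr.1 ≠ ∅ ∧ S₁ pr.1) ∨ (pr.2 ≠ ∅ ∧ S₂ pr.2)) :
    ∀ pr ∈ par B, (pr.1 ≠ ∅ ∧ S₁ pr.1) ∨ (pr.2 ≠ ∅ ∧ S₂ pr.2) := by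
  intro pr hpr
  obtain ⟨qr, hqr, h₁, h₂⟩ := h.exists_par hpr
  rcases hA qr hqr with ⟨hne, hS⟩ | ⟨hne, hS⟩
  · exact Or.inl ⟨h₁.ne_empty hne, m₁ h₁ hS⟩
  · exact Or.inr ⟨h₂.ne_empty hne, m₂ h₂ hS⟩

lemma hle.exists_par_of_exists_par
    (m₁ : ∀ ⦃U V⦄, hle U V → S₁ V → S₁ U) (m₂ : ∀ ⦃U V⦄, hle U V → S₂ V → S₂ U)
    (h : hle A B) (hB : ∃ pr ∈ par B, (pr.1 ≠ ∅ → S₁ pr.1) ∧ (pr.2 ≠ ∅ → S₂ pr.2)) :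
    ∃ pr ∈ par A, (pr.1 ≠ ∅ → S₁ pr.1) ∧ (pr.2 ≠ ∅ → S₂ pr.2) := by
  obtain ⟨pr, hpr, hS₁, hS₂⟩ := hB
  obtain ⟨qr, hqr, h₁, h₂⟩ := h.exists_par hpr
  exact ⟨qr, hqr, fun hne => m₁ h₁ (hS₁ (h₁.ne_empty hne)),
    fun hne => m₂ h₂ (hS₂ (h₂.ne_empty hne))⟩

end Refinement

lemma hle.extSpec {A B : Set (Set (Asg AP))} (h : hle A B) (ς : Spec AP) (p : AP) :
    hle (extSpec ς A p) (extSpec ς B p) := by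
  rintro _ ⟨W, hW, F, hF, rfl⟩
  obtain ⟨W', hW', hsub⟩ := h W hW
  exact ⟨extSet W' F p, ⟨W', hW', F, hF, rfl⟩, Set.image_mono hsub⟩

theorem sat_EA_mono_and_sat_AE_anti (φ : Formula AP) {𝔄 𝔅 : Set (Set (Asg AP))}
    (h : hle 𝔄 𝔅) : (Sat φ .EA 𝔄 → Sat φ .EA 𝔅) ∧ (Sat φ .AE 𝔅 → Sat φ .AE 𝔄) := by
  induction φ generalizing 𝔄 𝔅 with
  | atom Ψ =>
    constructor
    · rintro ⟨W, hW, hWΨ⟩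
      obtain ⟨W', hW', hsub⟩ := h W hW
      exact ⟨W', hW', hsub.trans hWΨ⟩
    · intro hs W hW
      obtain ⟨W', hW', hsub⟩ := h W hW
      exact Set.nonempty_iff_ne_empty.1
        ((Set.nonempty_iff_ne_empty.2 (hs W' hW')).mono (Set.inter_subset_inter_left Ψ hsub))
  | neg φ ih => exact ⟨fun hs hc => hs ((ih h).2 hc), fun hs hc => hs ((ih h).1 hc)⟩
  | conj φ₁ φ₂ ih₁ ih₂ =>
    have m₁ : ∀ ⦃U V⦄, hle U V → Sat φ₁ .EA U → Sat φ₁ .EA V := fun _ _ h => (ih₁ h).1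
    have m₂ : ∀ ⦃U V⦄, hle U V → Sat φ₂ .EA U → Sat φ₂ .EA V := fun _ _ h => (ih₂ h).1
    exact ⟨h.forall_par m₁ m₂, h.hdual.forall_par m₁ m₂⟩
  | disj φ₁ φ₂ ih₁ ih₂ =>
    have m₁ : ∀ ⦃U V⦄, hle U V → Sat φ₁ .AE V → Sat φ₁ .AE U := fun _ _ h => (ih₁ h).2
    have m₂ : ∀ ⦃U V⦄, hle U V → Sat φ₂ .AE V → Sat φ₂ .AE U := fun _ _ h => (ih₂ h).2
    exact ⟨h.hdual.exists_par_of_exists_par m₁ m₂, h.exists_par_of_exists_par m₁ m₂⟩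
  | ex p ς φ ih => exact ⟨(ih (h.extSpec ς p)).1, (ih (h.hdual.extSpec ς p)).1⟩
  | all p ς φ ih => exact ⟨(ih (h.hdual.extSpec ς p)).2, (ih (h.extSpec ς p)).2⟩

theorem hyperassignment_equivalence_general (φ : Formula AP)
    (𝔄₁ 𝔄₂ : Set (Set (Asg AP)))
    (h : heqv 𝔄₁ 𝔄₂) (α : Flag) :
    Sat φ α 𝔄₁ ↔ Sat φ α 𝔄₂ := by
  obtain ⟨h₁₂, h₂₁⟩ := h
  cases α with
  | EA =>
    exact ⟨(sat_EA_mono_and_sat_AE_anti φ h₁₂).1, (sat_EA_mono_and_sat_AE_anti φ h₂₁).1⟩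
  | AE =>
    exact ⟨(sat_EA_mono_and_sat_AE_anti φ h₂₁).2, (sat_EA_mono_and_sat_AE_anti φ h₁₂).2⟩

/-- Corollary 1 (Hyperassignment Equivalence). -/
theorem hyperassignment_equivalence (φ : Formula AP)
    (𝔄₁ 𝔄₂ : Set (Set (Asg AP))) (h₁ : IsHyp 𝔄₁) (h₂ : IsHyp 𝔄₂)
    (h : heqv 𝔄₁ 𝔄₂) (α : Flag) :
    Sat φ α 𝔄₁ ↔ Sat φ α 𝔄₂ :=
  hyperassignment_equivalence_general φ 𝔄₁ 𝔄₂ h α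

end GFG
end

section
/- Let φ be a GFG-QPTL formula, 𝔄 a hyperassignment, and α ∈ {EA, AE} an alternation flag. Then dual(𝔄) ⊨^{ᾱ} φ if and only if 𝔄 ⊨^α φ; consequently, dual(dual(𝔄)) ⊨^α φ if and only if 𝔄 ⊨^α φ. (Theorem 3, Double Dualization.) -/
namespace GFG

variable {AP : Type*}

variable [DecidableEq AP]

/-!
Dualization reverses `⊑`, and `dual (dual 𝔄) ≡ 𝔄`. Every `W ∈ 𝔄` meets every set of `dual 𝔄`,
so a choice function of `dual 𝔄` picking inside `W` yields a subset of `W` in the double dual.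
Conversely, if `Ξ '' dual 𝔄` contained no `W ∈ 𝔄`, a choice function `ϑ` of `𝔄` could pick
outside it everywhere, yet `Ξ` picks a point of `ϑ '' 𝔄` inside it.
By induction on `φ`, `⊨^EA` is monotone and `⊨^AE` antitone in `⊑`, so both are invariant
under `≡`. For each connective and quantifier one flag is defined by dualizing: for that flag
the claim holds by definition, and for the other it unfolds to `dual (dual 𝔄) ⊨^α φ`. Atoms
are a direct choice-function argument, and negations follow by induction.
-/

lemma exists_fun_forall_mem {α β : Type*} [Nonempty β] {s : Set α} {P : α → β → Prop}
    (h : ∀ a ∈ s, ∃ b, P a b) : ∃ f : α → β, ∀ a ∈ s, P a (f a) := by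
  have h' : ∀ a, ∃ b, a ∈ s → P a b := fun a =>
    (em (a ∈ s)).elim (fun ha => (h a ha).imp fun _ hb _ => hb)
      fun ha => ⟨Classical.arbitrary β, fun ha' => absurd ha' ha⟩
  choose f hf using h'
  exact ⟨f, hf⟩

section Hyper

variable {X : Type*}

lemma exists_isChoice [Nonempty X] {𝔄 : Set (Set X)} {P : Set X → X → Prop}
    (h : ∀ W ∈ 𝔄, ∃ x ∈ W, P W x) : ∃ ϑ, IsChoice 𝔄 ϑ ∧ ∀ W ∈ 𝔄, P W (ϑ W) := by
  obtain ⟨ϑ, hϑ⟩ := exists_fun_forall_mem h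
  exact ⟨ϑ, fun W hW => (hϑ W hW).1, fun W hW => (hϑ W hW).2⟩

lemma hle.exists_fun {𝔄₁ 𝔄₂ : Set (Set X)} (h : hle 𝔄₁ 𝔄₂) :
    ∃ g : Set X → Set X, ∀ W ∈ 𝔄₁, g W ∈ 𝔄₂ ∧ g W ⊆ W :=
  exists_fun_forall_mem h

lemma hle.ne_empty_s13 {𝔄₁ 𝔄₂ : Set (Set X)} (h : hle 𝔄₁ 𝔄₂) (h₁ : 𝔄₁ ≠ ∅) : 𝔄₂ ≠ ∅ := by
  obtain ⟨W₁, hW₁⟩ := Set.nonempty_iff_ne_empty.mpr h₁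
  obtain ⟨W₂, hW₂, -⟩ := h W₁ hW₁
  exact Set.nonempty_iff_ne_empty.mp ⟨W₂, hW₂⟩

lemma hdual_anti {𝔄₁ 𝔄₂ : Set (Set X)} (h : hle 𝔄₁ 𝔄₂) : hle (hdual 𝔄₂) (hdual 𝔄₁) := by
  rintro _ ⟨ϑ, hϑ, rfl⟩
  obtain ⟨g, hg⟩ := h.exists_fun
  refine ⟨(ϑ ∘ g) '' 𝔄₁, ⟨ϑ ∘ g, fun W hW => (hg W hW).2 (hϑ _ (hg W hW).1), rfl⟩, ?_⟩
  rintro _ ⟨W, hW, rfl⟩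
  exact ⟨g W, (hg W hW).1, rfl⟩

lemma exists_par_hle {𝔄₁ 𝔄₂ : Set (Set X)} (h : hle 𝔄₁ 𝔄₂)
    {pr : Set (Set X) × Set (Set X)} (hpr : pr ∈ par 𝔄₂) :
    ∃ pr' ∈ par 𝔄₁, hle pr'.1 pr.1 ∧ hle pr'.2 pr.2 := by
  obtain ⟨g, hg⟩ := h.exists_fun
  have hg₂ : ∀ W ∈ 𝔄₁, g W ∉ pr.1 → g W ∈ pr.2 := fun W hW h₁ =>
    ((hpr.1.symm ▸ (hg W hW).1 : g W ∈ pr.1 ∪ pr.2)).resolve_left h₁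
  refine ⟨({W ∈ 𝔄₁ | g W ∈ pr.1}, {W ∈ 𝔄₁ | g W ∉ pr.1}), ⟨?_, ?_⟩, ?_, ?_⟩
  · ext W
    simp only [Set.mem_union, Set.mem_sep_iff]
    tauto
  · exact Set.disjoint_left.mpr fun _ h₁ h₂ => h₂.2 h₁.2
  · exact fun W hW => ⟨g W, hW.2, (hg W hW.1).2⟩
  · exact fun W hW => ⟨g W, hg₂ W hW.1 hW.2, (hg W hW.1).2⟩

variable [Nonempty X]

lemma hle_hdual_hdual (𝔄 : Set (Set X)) : hle 𝔄 (hdual (hdual 𝔄)) := by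
  intro W hW
  have hmeet : ∀ Y ∈ hdual 𝔄, ∃ x ∈ Y, x ∈ W := by
    rintro _ ⟨ϑ, hϑ, rfl⟩
    exact ⟨ϑ W, ⟨W, hW, rfl⟩, hϑ W hW⟩
  obtain ⟨Ξ, hΞ, hΞW⟩ := exists_isChoice hmeet
  exact ⟨Ξ '' hdual 𝔄, ⟨Ξ, hΞ, rfl⟩, Set.image_subset_iff.mpr hΞW⟩

lemma hdual_hdual_hle (𝔄 : Set (Set X)) : hle (hdual (hdual 𝔄)) 𝔄 := by
  rintro _ ⟨Ξ, hΞ, rfl⟩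
  by_contra! hc
  obtain ⟨ϑ, hϑ, hϑΞ⟩ := exists_isChoice fun W hW => Set.not_subset.mp (hc W hW)
  have hY : ϑ '' 𝔄 ∈ hdual 𝔄 := ⟨ϑ, hϑ, rfl⟩
  obtain ⟨W, hW, hWΞ⟩ := hΞ _ hY
  exact hϑΞ W hW (hWΞ ▸ Set.mem_image_of_mem Ξ hY)

lemma heqv_hdual_hdual (𝔄 : Set (Set X)) : heqv (hdual (hdual 𝔄)) 𝔄 :=
  ⟨hdual_hdual_hle 𝔄, hle_hdual_hdual 𝔄⟩

lemma forall_hdual_inter_ne_empty_iff {𝔄 : Set (Set X)} {Ψ : Set X} :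
    (∀ Y ∈ hdual 𝔄, Y ∩ Ψ ≠ ∅) ↔ ∃ W ∈ 𝔄, W ⊆ Ψ := by
  constructor
  · intro h
    by_contra! hc
    obtain ⟨ϑ, hϑ, hϑΨ⟩ := exists_isChoice fun W hW => Set.not_subset.mp (hc W hW)
    refine h _ ⟨ϑ, hϑ, rfl⟩ (Set.eq_empty_iff_forall_notMem.mpr ?_)
    rintro _ ⟨⟨W, hW, rfl⟩, hx⟩
    exact hϑΨ W hW hx
  · rintro ⟨W, hW, hWΨ⟩ _ ⟨ϑ, hϑ, rfl⟩
    exact Set.nonempty_iff_ne_empty.mp ⟨ϑ W, ⟨W, hW, rfl⟩, hWΨ (hϑ W hW)⟩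

lemma exists_hdual_subset_iff {𝔄 : Set (Set X)} {Ψ : Set X} :
    (∃ Y ∈ hdual 𝔄, Y ⊆ Ψ) ↔ ∀ W ∈ 𝔄, W ∩ Ψ ≠ ∅ := by
  constructor
  · rintro ⟨_, ⟨ϑ, hϑ, rfl⟩, hYΨ⟩ W hW
    exact Set.nonempty_iff_ne_empty.mp ⟨ϑ W, hϑ W hW, hYΨ ⟨W, hW, rfl⟩⟩
  · intro h
    obtain ⟨ϑ, hϑ, hϑΨ⟩ := exists_isChoice fun W hW => Set.nonempty_iff_ne_empty.mpr (h W hW)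
    exact ⟨ϑ '' 𝔄, ⟨ϑ, hϑ, rfl⟩, Set.image_subset_iff.mpr hϑΨ⟩

end Hyper

lemma extSpec_mono {ς : Spec AP} {p : AP} {𝔄₁ 𝔄₂ : Set (Set (Asg AP))} (h : hle 𝔄₁ 𝔄₂) :
    hle (extSpec ς 𝔄₁ p) (extSpec ς 𝔄₂ p) := by
  rintro _ ⟨W, hW, F, hF, rfl⟩
  obtain ⟨W₂, hW₂, hsub⟩ := h W hW
  exact ⟨extSet W₂ F p, ⟨W₂, hW₂, F, hF, rfl⟩, Set.image_mono hsub⟩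

lemma sat_mono (φ : Formula AP) {𝔄₁ 𝔄₂ : Set (Set (Asg AP))} (h : hle 𝔄₁ 𝔄₂) :
    (Sat φ .EA 𝔄₁ → Sat φ .EA 𝔄₂) ∧ (Sat φ .AE 𝔄₂ → Sat φ .AE 𝔄₁) := by
  induction φ generalizing 𝔄₁ 𝔄₂ with
  | atom Ψ =>
    constructor
    · rintro ⟨W, hW, hWΨ⟩
      obtain ⟨W₂, hW₂, hsub⟩ := h W hW
      exact ⟨W₂, hW₂, hsub.trans hWΨ⟩
    · intro hs W hW
      obtain ⟨W₂, hW₂, hsub⟩ := h W hW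
      exact Set.nonempty_iff_ne_empty.mp <|
        (Set.nonempty_iff_ne_empty.mpr (hs W₂ hW₂)).mono (Set.inter_subset_inter_left _ hsub)
  | neg φ ih =>
    exact ⟨fun h₁ h₂ => h₁ ((ih h).2 h₂), fun h₂ h₁ => h₂ ((ih h).1 h₁)⟩
  | conj φ₁ φ₂ ih₁ ih₂ =>
    have key : ∀ {𝔅₁ 𝔅₂ : Set (Set (Asg AP))}, hle 𝔅₁ 𝔅₂ →
        (∀ pr ∈ par 𝔅₁, (pr.1 ≠ ∅ ∧ Sat φ₁ .EA pr.1) ∨ (pr.2 ≠ ∅ ∧ Sat φ₂ .EA pr.2)) →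
        ∀ pr ∈ par 𝔅₂, (pr.1 ≠ ∅ ∧ Sat φ₁ .EA pr.1) ∨ (pr.2 ≠ ∅ ∧ Sat φ₂ .EA pr.2) := by
      intro 𝔅₁ 𝔅₂ h hsat pr hpr
      obtain ⟨pr', hpr', h₁, h₂⟩ := exists_par_hle h hpr
      exact (hsat pr' hpr').imp (fun ⟨hne, hs⟩ => ⟨h₁.ne_empty_s13 hne, (ih₁ h₁).1 hs⟩)
        fun ⟨hne, hs⟩ => ⟨h₂.ne_empty_s13 hne, (ih₂ h₂).1 hs⟩
    exact ⟨key h, key (hdual_anti h)⟩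
  | disj φ₁ φ₂ ih₁ ih₂ =>
    have key : ∀ {𝔅₁ 𝔅₂ : Set (Set (Asg AP))}, hle 𝔅₁ 𝔅₂ →
        (∃ pr ∈ par 𝔅₂, (pr.1 ≠ ∅ → Sat φ₁ .AE pr.1) ∧ (pr.2 ≠ ∅ → Sat φ₂ .AE pr.2)) →
        ∃ pr ∈ par 𝔅₁, (pr.1 ≠ ∅ → Sat φ₁ .AE pr.1) ∧ (pr.2 ≠ ∅ → Sat φ₂ .AE pr.2) := by
      rintro 𝔅₁ 𝔅₂ h ⟨pr, hpr, hs₁, hs₂⟩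
      obtain ⟨pr', hpr', h₁, h₂⟩ := exists_par_hle h hpr
      exact ⟨pr', hpr', fun hne => (ih₁ h₁).2 (hs₁ (h₁.ne_empty_s13 hne)),
        fun hne => (ih₂ h₂).2 (hs₂ (h₂.ne_empty_s13 hne))⟩
    exact ⟨key (hdual_anti h), key h⟩
  | ex p ς φ ih =>
    exact ⟨(ih (extSpec_mono h)).1, (ih (extSpec_mono (hdual_anti h))).1⟩
  | all p ς φ ih =>
    exact ⟨(ih (extSpec_mono (hdual_anti h))).2, (ih (extSpec_mono h)).2⟩

lemma sat_congr (φ : Formula AP) {𝔄₁ 𝔄₂ : Set (Set (Asg AP))} (h : heqv 𝔄₁ 𝔄₂) :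
    ∀ α, Sat φ α 𝔄₁ ↔ Sat φ α 𝔄₂
  | .EA => ⟨(sat_mono φ h.1).1, (sat_mono φ h.2).1⟩
  | .AE => ⟨(sat_mono φ h.2).2, (sat_mono φ h.1).2⟩

lemma sat_dual_hdual (φ : Formula AP) (𝔄 : Set (Set (Asg AP))) :
    ∀ α, Sat φ α.dual (hdual 𝔄) ↔ Sat φ α 𝔄 := by
  have hdd := heqv_hdual_hdual 𝔄
  induction φ with
  | atom Ψ => rintro (_ | _); exacts [forall_hdual_inter_ne_empty_iff, exists_hdual_subset_iff]
  | neg φ ih => rintro (_ | _); exacts [not_congr (ih .AE), not_congr (ih .EA)]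
  | conj φ₁ φ₂ => rintro (_ | _); exacts [sat_congr (.conj φ₁ φ₂) hdd .EA, .rfl]
  | disj φ₁ φ₂ => rintro (_ | _); exacts [.rfl, sat_congr (.disj φ₁ φ₂) hdd .AE]
  | ex p ς φ => rintro (_ | _); exacts [sat_congr (.ex p ς φ) hdd .EA, .rfl]
  | all p ς φ => rintro (_ | _); exacts [.rfl, sat_congr (.all p ς φ) hdd .AE]

theorem double_dualization_general (φ : Formula AP)
    (𝔄 : Set (Set (Asg AP))) (α : Flag) :
    (Sat φ α.dual (hdual 𝔄) ↔ Sat φ α 𝔄) ∧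
    (Sat φ α (hdual (hdual 𝔄)) ↔ Sat φ α 𝔄) :=
  ⟨sat_dual_hdual φ 𝔄 α, sat_congr φ (heqv_hdual_hdual 𝔄) α⟩

/-- Theorem 3 (Double Dualization). -/
theorem double_dualization (φ : Formula AP)
    (𝔄 : Set (Set (Asg AP))) (h : IsHyp 𝔄) (α : Flag) :
    (Sat φ α.dual (hdual 𝔄) ↔ Sat φ α 𝔄) ∧
    (Sat φ α (hdual (hdual 𝔄)) ↔ Sat φ α 𝔄) :=
  double_dualization_general φ 𝔄 α

end GFG
end
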